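/- arXiv:2202.03075 — 2 statements merged into one kernel-verified Lean document; each statement's English description precedes it below -/
import Mathlib

section
/- A sofic shift X is irreducible if and only if its minimal right-resolving presentation 𝒢 is irreducible (i.e., the underlying directed graph is strongly connected, equivalently the adjacency matrix A_𝒢 is irreducible). -/
open Filter Topology

/-- The (left) shift map on bi-infinite sequences. -/
def shift {A : Type*} (x : ℤ → A) : ℤ → A := fun k => x (k + 1)

/-- The word `w` occurs in the sequence `x` starting at coordinate `k`. -/
def occursAt {A : Type*} (w : List A) (x : ℤ → A) (k : ℤ) : Prop :=
  ∀ i : Fin w.length, x (k + (i : ℤ)) = w.get i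

/-- `w` is a word of the shift space `X`. -/
def isWordOf {A : Type*} (X : Set (ℤ → A)) (w : List A) : Prop :=
  ∃ x ∈ X, ∃ k : ℤ, occursAt w x k

/-- `X` is irreducible: any two words of `X` can be joined by some word. -/
def IrreducibleShift {A : Type*} (X : Set (ℤ → A)) : Prop :=
  ∀ u v : List A, isWordOf X u → isWordOf X v → ∃ w : List A, isWordOf X (u ++ w ++ v)

/-- The number of words of length `n` in `X`. -/
noncomputable def wordCount {A : Type*} (X : Set (ℤ → A)) (n : ℕ) : ℕ :=
  Set.ncard {w : List A | w.length = n ∧ isWordOf X w}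

/-- `X` has topological entropy `h`, i.e. `(1/n) log |B_n(X)| → h`. -/
def HasEntropy {A : Type*} (X : Set (ℤ → A)) (h : ℝ) : Prop :=
  Tendsto (fun n : ℕ => Real.log (wordCount X n) / n) atTop (𝓝 h)

/-- A right-resolving labelled graph on vertex set `Fin S`: for each vertex and each
label there is at most one outgoing edge with that label, recorded by the partial
transition map `δ`. -/
structure RRGraph (A : Type*) where
  S : ℕ
  δ : Fin S → A → Option (Fin S)

namespace RRGraph

variable {A : Type*} (G : RRGraph A)

/-- Every vertex has an outgoing and an incoming edge (neither a source nor a sink). -/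
def Essential : Prop :=
  ∀ v : Fin G.S, (∃ a w, G.δ v a = some w) ∧ (∃ u a, G.δ u a = some v)

/-- The sofic shift presented by `G`: labels of bi-infinite paths. -/
def lang : Set (ℤ → A) :=
  {x | ∃ π : ℤ → Fin G.S, ∀ k : ℤ, G.δ (π k) (x k) = some (π (k + 1))}

/-- `G` is a presentation of `X`. -/
def presents (X : Set (ℤ → A)) : Prop := X = G.lang

/-- The terminal vertex (if any) of the path starting at `v` labelled by the word `w`. -/
def run (v : Fin G.S) (w : List A) : Option (Fin G.S) :=
  w.foldl (fun o a => o.bind fun u => G.δ u a) (some v)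

/-- The word `w` is synchronising in `G`: all paths labelled `w` end at the same vertex. -/
def Synchronising (w : List A) : Prop :=
  ∃ t : Fin G.S, ∀ v u : Fin G.S, G.run v w = some u → u = t

/-- The adjacency matrix of the underlying graph of `G`. -/
def adj [Fintype A] : Matrix (Fin G.S) (Fin G.S) ℕ :=
  fun u v => (Finset.univ.filter fun a : A => G.δ u a = some v).card

end RRGraph

/-- `X` is a sofic shift: it is presented by some (right-resolving) labelled graph. -/
def IsSofic {A : Type*} (X : Set (ℤ → A)) : Prop := ∃ G : RRGraph A, G.presents X

/-- `G` is a minimal right-resolving presentation of `X`: an essential right-resolving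
presentation with the fewest vertices among all right-resolving presentations. -/
def IsMinRR {A : Type*} (G : RRGraph A) (X : Set (ℤ → A)) : Prop :=
  G.presents X ∧ G.Essential ∧ ∀ G' : RRGraph A, G'.presents X → G.S ≤ G'.S

/-- A nonnegative matrix is irreducible. -/
def MatIrred {n : ℕ} (M : Matrix (Fin n) (Fin n) ℕ) : Prop :=
  ∀ i j : Fin n, ∃ k : ℕ, 0 < k ∧ 0 < (M ^ k) i j

/-- `p` is the period of the irreducible matrix `M` (computed at the index `i`):
`p` is a gcd of the set `{k > 0 | (M^k) i i > 0}`. -/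
def IsMatPeriod {n : ℕ} (M : Matrix (Fin n) (Fin n) ℕ) (i : Fin n) (p : ℕ) : Prop :=
  (∀ k : ℕ, 0 < k → 0 < (M ^ k) i i → p ∣ k) ∧
    ∀ q : ℕ, (∀ k : ℕ, 0 < k → 0 < (M ^ k) i i → q ∣ k) → q ∣ p

/-- The spectral radius of a complex matrix: the supremum of the moduli of the roots of
its characteristic polynomial (i.e. of its eigenvalues). -/
noncomputable def specRad {ι : Type*} [Fintype ι] [DecidableEq ι] (M : Matrix ι ι ℂ) : ℝ :=
  sSup ((fun z : ℂ => ‖z‖) '' {μ : ℂ | M.charpoly.IsRoot μ})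

/-- Points of `X` that are periodic with (not necessarily prime) period `n`. -/
def periodicIn {A : Type*} (X : Set (ℤ → A)) (n : ℕ) : Set (ℤ → A) :=
  {x | x ∈ X ∧ shift^[n] x = x}

/-- Points of `X` with prime period `n`. -/
def primePeriodicIn {A : Type*} (X : Set (ℤ → A)) (n : ℕ) : Set (ℤ → A) :=
  {x | x ∈ X ∧ shift^[n] x = x ∧ ∀ k : ℕ, 0 < k → k < n → shift^[k] x ≠ x}

/-- The number of closed orbits of length `n` in `X`. -/
noncomputable def orbitCount {A : Type*} (X : Set (ℤ → A)) (n : ℕ) : ℕ :=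
  Set.ncard (primePeriodicIn X n) / n

/-- The prime orbit counting function `π_σ(N)` of `X`. -/
noncomputable def piCount {A : Type*} (X : Set (ℤ → A)) (N : ℕ) : ℕ :=
  ∑ n ∈ Finset.Icc 1 N, orbitCount X n

/-!
Let `G` present `X` with the fewest possible vertices. For every vertex `j` some word of `X` is
read only along paths through `j`: otherwise every word, hence by compactness every point of `X`,
labels a path avoiding `j`, and `G` with `j` deleted would be a smaller presentation. When `X` is
irreducible, two such words, for `i` and for `j`, are joined inside a single point of `X`, whose
path then runs from `i` to `j`.

Conversely, if `G` is irreducible, a path labelled `u`, a connecting path and a path labelled `v`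
close up, through a path back to the start, to a cycle; the periodic point running around that
cycle shows that `u w v` is a word of `X`.
-/

section Words

variable {A : Type*}

theorem occursAt_append_left {u v : List A} {x : ℤ → A} {k : ℤ}
    (h : occursAt (u ++ v) x k) : occursAt u x k := fun i => by
  simpa [List.getElem_append_left] using h ⟨i, by simp; omega⟩

theorem occursAt_append_right {u v : List A} {x : ℤ → A} {k : ℤ}
    (h : occursAt (u ++ v) x k) : occursAt v x (k + u.length) := fun i => by
  simpa [add_assoc] using h ⟨u.length + i, by simp⟩

theorem occursAt_ofFn (x : ℤ → A) (k : ℤ) (n : ℕ) :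
    occursAt (List.ofFn fun i : Fin n => x (k + i)) x k := fun i => by
  simp

theorem occursAt_ofFn_apply {x z : ℤ → A} {a k t : ℤ} {n : ℕ}
    (h : occursAt (List.ofFn fun i : Fin n => x (a + i)) z k) (h₁ : a ≤ t) (h₂ : t < a + n) :
    z (k + (t - a)) = x t := by
  have := h ⟨(t - a).toNat, by simp; omega⟩
  simp only [List.get_eq_getElem, List.getElem_ofFn] at this
  rwa [Int.toNat_of_nonneg (by omega), add_sub_cancel] at this

end Words

theorem exists_chain_of_forall_window {V : Type*} [Finite V] (R : ℤ → V → V → Prop)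
    (h : ∀ n : ℕ, ∃ q : ℤ → V, ∀ t, -(n : ℤ) ≤ t → t < n → R t (q t) (q (t + 1))) :
    ∃ q : ℤ → V, ∀ t, R t (q t) (q (t + 1)) := by
  let _ : TopologicalSpace V := ⊥
  have _ : DiscreteTopology V := ⟨rfl⟩
  let C : ℕ → Set (ℤ → V) := fun n =>
    ⋂ t ∈ Finset.Ico (-(n : ℤ)) n, {q | R t (q t) (q (t + 1))}
  have hC : ∀ n, IsClosed (C n) := fun n =>
    isClosed_biInter fun t _ => (isClosed_discrete {p : V × V | R t p.1 p.2}).preimage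
      (f := fun q : ℤ → V => (q t, q (t + 1))) (by fun_prop)
  have hmono : ∀ n, C (n + 1) ⊆ C n := fun n =>
    Set.biInter_mono
      (fun t ht => by simp only [Finset.coe_Ico, Set.mem_Ico] at ht ⊢; push_cast; omega)
      fun _ _ => subset_rfl
  obtain ⟨q, hq⟩ := IsCompact.nonempty_iInter_of_sequence_nonempty_isCompact_isClosed C hmono
    (fun n => (h n).imp fun q hq => by simpa [C] using hq) (hC 0).isCompact hC
  refine ⟨q, fun t => ?_⟩
  simp only [C, Set.mem_iInter] at hq
  exact hq t.natAbs.succ t (Finset.mem_Ico.2 ⟨by omega, by omega⟩)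

namespace RRGraph

variable {A : Type*} {G : RRGraph A}

variable (G) in
def IsPath (π : ℤ → Fin G.S) (x : ℤ → A) : Prop :=
  ∀ k, G.δ (π k) (x k) = some (π (k + 1))

theorem foldl_eq_bind_run (o : Option (Fin G.S)) (w : List A) :
    w.foldl (fun o a => o.bind fun u => G.δ u a) o = o.bind (G.run · w) := by
  cases o with
  | some v => rfl
  | none => induction w <;> simp_all

@[simp] theorem run_nil (v : Fin G.S) : G.run v [] = some v := rfl

@[simp] theorem run_singleton (v : Fin G.S) (a : A) : G.run v [a] = G.δ v a := rfl

theorem run_append (v : Fin G.S) (u w : List A) :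
    G.run v (u ++ w) = (G.run v u).bind (G.run · w) := by
  rw [run, List.foldl_append, foldl_eq_bind_run]; rfl

theorem run_of_isPath {π : ℤ → Fin G.S} {x : ℤ → A} (hπ : G.IsPath π x) {w : List A} {k : ℤ}
    (hw : occursAt w x k) : G.run (π k) w = some (π (k + w.length)) := by
  induction w generalizing k with
  | nil => simp
  | cons a w ih =>
    have ha : x k = a := by simpa using hw ⟨0, by simp⟩
    have ih' := ih (occursAt_append_right (u := [a]) hw)
    rw [← List.singleton_append, run_append, run_singleton, ← ha, hπ, Option.bind_some]
    simpa [add_assoc, add_comm (1 : ℤ)] using ih'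

theorem run_take_ne_none {v : Fin G.S} {w : List A} (h : G.run v w ≠ none) (r : ℕ) :
    G.run v (w.take r) ≠ none := by
  rw [← List.take_append_drop r w, run_append] at h
  rintro h'
  simp [h'] at h

theorem run_take_add_one (v : Fin G.S) {w : List A} {r : ℕ} (hr : r < w.length) :
    G.run v (w.take (r + 1)) = (G.run v (w.take r)).bind (G.δ · w[r]) := by
  rw [List.take_add_one, List.getElem?_eq_getElem hr, Option.toList_some, run_append]
  rfl

theorem exists_vertices_of_run_eq_some {i j : Fin G.S} {w : List A} (h : G.run i w = some j) :
    ∃ q : ℕ → Fin G.S, q 0 = i ∧ q w.length = j ∧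
      ∀ r (hr : r < w.length), G.δ (q r) w[r] = some (q (r + 1)) := by
  refine ⟨fun r => (G.run i (w.take r)).getD i, by simp, by simp [h], fun r hr => ?_⟩
  have hne := run_take_ne_none (v := i) (w := w) (by simp [h])
  obtain ⟨m, hm⟩ := Option.ne_none_iff_exists'.1 (hne r)
  obtain ⟨m', hm'⟩ := Option.ne_none_iff_exists'.1 (hne (r + 1))
  rw [run_take_add_one i hr, hm, Option.bind_some] at hm'
  show G.δ ((G.run i (w.take r)).getD i) w[r] = some ((G.run i (w.take (r + 1))).getD i)
  rw [run_take_add_one i hr, hm, Option.bind_some, Option.getD_some, hm', Option.getD_some]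

theorem isWordOf_lang_of_run_eq_self {i : Fin G.S} {w : List A} (hw : w ≠ [])
    (h : G.run i w = some i) : isWordOf G.lang w := by
  obtain ⟨q, hq0, hqn, hq⟩ := exists_vertices_of_run_eq_some h
  have hn : (0 : ℤ) < w.length := by simpa using List.length_pos_of_ne_nil hw
  obtain ⟨r, hr_def⟩ : ∃ r : ℤ → ℕ, ∀ t, r t = (t % w.length).toNat := ⟨_, fun _ => rfl⟩
  have hr : ∀ t, r t < w.length := fun t => by
    have := Int.emod_lt_of_pos t hn; have := hr_def t; omega
  have hr_succ : ∀ t, q (r (t + 1)) = q (r t + 1) := fun t => by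
    have h₀ := Int.emod_nonneg t hn.ne'
    have h₁ := Int.emod_lt_of_pos t hn
    rw [hr_def, hr_def, ← Int.emod_add_emod t]
    rcases (by omega : t % w.length + 1 < w.length ∨ t % w.length + 1 = w.length) with h | h
    · rw [Int.emod_eq_of_lt (by omega) h]; congr 1; omega
    · rw [h, Int.emod_self, Int.toNat_zero, hq0, ← hqn]; congr 1; omega
  refine ⟨fun t => w[r t]'(hr t), ⟨fun t => q (r t), fun t => ?_⟩, 0, fun k => ?_⟩
  · show G.δ (q (r t)) (w[r t]'(hr t)) = some (q (r (t + 1)))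
    rw [hr_succ]; exact hq _ (hr t)
  · have : r k = k := by have := k.isLt; rw [hr_def, Int.emod_eq_of_lt] <;> omega
    simp [this]

open Classical in
variable (G) in
noncomputable def restrict (J : Set (Fin G.S)) : RRGraph A where
  S := Nat.card J
  δ i a := (G.δ (Finite.equivFin J |>.symm i) a).bind fun u =>
    if h : u ∈ J then some (Finite.equivFin J ⟨u, h⟩) else none

variable (G) in
noncomputable def restrictEquiv (J : Set (Fin G.S)) : J ≃ Fin (G.restrict J).S :=
  Finite.equivFin J

theorem restrict_δ_restrictEquiv (J : Set (Fin G.S)) (v u : J) (a : A) :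
    (G.restrict J).δ (G.restrictEquiv J v) a = some (G.restrictEquiv J u) ↔
      G.δ v a = some (u : Fin G.S) := by
  change (G.δ (Finite.equivFin J |>.symm (Finite.equivFin J v)) a).bind _ = _ ↔ _
  rw [Equiv.symm_apply_apply]
  cases G.δ v a with
  | none => simp
  | some m =>
    by_cases hm : m ∈ J
    · simp only [Option.bind_some, hm, dite_true]
      exact Option.some_inj.trans ((Finite.equivFin J).apply_eq_iff_eq.trans
        (Subtype.ext_iff.trans Option.some_inj.symm))
    · simp only [Option.bind_some, hm, dite_false, reduceCtorEq, Option.some_inj, false_iff]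
      exact fun h => hm (h ▸ u.2)

theorem lang_restrict (J : Set (Fin G.S)) :
    (G.restrict J).lang = {x | ∃ π, (∀ t, π t ∈ J) ∧ G.IsPath π x} := by
  ext x
  constructor
  · rintro ⟨ρ, hρ⟩
    refine ⟨fun t => (G.restrictEquiv J).symm (ρ t), fun t => Subtype.prop _, fun t => ?_⟩
    have h := hρ t
    rwa [← (G.restrictEquiv J).apply_symm_apply (ρ t),
      ← (G.restrictEquiv J).apply_symm_apply (ρ (t + 1)), restrict_δ_restrictEquiv] at h
  · rintro ⟨π, hJ, hπ⟩
    exact ⟨fun t => G.restrictEquiv J ⟨π t, hJ t⟩, fun t => (restrict_δ_restrictEquiv ..).2 (hπ t)⟩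

theorem eq_univ_of_lang_subset (hmin : ∀ G' : RRGraph A, G'.presents G.lang → G.S ≤ G'.S)
    {J : Set (Fin G.S)} (hJ : G.lang ⊆ {x | ∃ π, (∀ t, π t ∈ J) ∧ G.IsPath π x}) :
    J = Set.univ := by
  have hpres : (G.restrict J).presents G.lang := by
    rw [presents, lang_restrict]
    exact hJ.antisymm fun x ⟨π, _, hπ⟩ => ⟨π, hπ⟩
  refine Set.eq_of_subset_of_ncard_le J.subset_univ ?_
  rw [Set.ncard_univ, Nat.card_eq_fintype_card, Fintype.card_fin, ← Nat.card_coe_set_eq]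
  exact hmin _ hpres

variable (G) in
def Forces (w : List A) (j : Fin G.S) : Prop :=
  ∀ (z : ℤ → A) (π : ℤ → Fin G.S) (k : ℤ), G.IsPath π z → occursAt w z k →
    ∃ t, k ≤ t ∧ t < k + w.length ∧ π t = j

theorem exists_forces (hmin : ∀ G' : RRGraph A, G'.presents G.lang → G.S ≤ G'.S)
    (j : Fin G.S) : ∃ w, isWordOf G.lang w ∧ G.Forces w j := by
  by_contra! hfree
  suffices ({j}ᶜ : Set (Fin G.S)) = Set.univ by simpa using congrArg (j ∈ ·) this
  refine eq_univ_of_lang_subset hmin fun x hx => ?_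
  have hwindow : ∀ n : ℕ, ∃ q : ℤ → Fin G.S, ∀ t, -(n : ℤ) ≤ t → t < n →
      q t ≠ j ∧ G.δ (q t) (x t) = some (q (t + 1)) := fun n => by
    have hw := hfree _ ⟨x, hx, _, occursAt_ofFn x (-n) (2 * n)⟩
    simp only [Forces, not_forall, not_exists, not_and] at hw
    obtain ⟨z, π, k, hπ, hocc, hj⟩ := hw
    refine ⟨fun t => π (k + (t - -n)), fun t h₁ h₂ => ⟨hj _ (by omega) (by simp; omega), ?_⟩⟩
    rw [← occursAt_ofFn_apply hocc (by omega) (by push_cast; omega), hπ]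
    congr 2
    ring
  obtain ⟨q, hq⟩ := exists_chain_of_forall_window
    (fun t v v' => v ≠ j ∧ G.δ v (x t) = some v') hwindow
  exact ⟨q, fun t => (hq t).1, fun t => (hq t).2⟩

section Adjacency

variable [Fintype A]

theorem adj_pos_iff (u v : Fin G.S) : 0 < G.adj u v ↔ ∃ a, G.δ u a = some v := by
  simp [adj, Finset.card_pos, Finset.filter_nonempty_iff]

theorem adj_pow_pos_iff_exists_run (k : ℕ) (i j : Fin G.S) :
    0 < (G.adj ^ k) i j ↔ ∃ w : List A, w.length = k ∧ G.run i w = some j := by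
  induction k generalizing j with
  | zero => simp [Matrix.one_apply, List.length_eq_zero_iff, eq_comm, apply_ite (0 < ·)]
  | succ k ih =>
    simp only [pow_succ, Matrix.mul_apply, Finset.sum_pos_iff, Finset.mem_univ, true_and,
      CanonicallyOrderedAdd.mul_pos, ih, adj_pos_iff]
    constructor
    · rintro ⟨u, ⟨w, rfl, hw⟩, a, ha⟩
      exact ⟨w ++ [a], by simp, by simp [run_append, hw, ha]⟩
    · rintro ⟨w, hw, hrun⟩
      have hne : w ≠ [] := List.ne_nil_of_length_eq_add_one hw
      rw [← List.dropLast_append_getLast hne, run_append, Option.bind_eq_some_iff] at hrun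
      obtain ⟨u, hu, ha⟩ := hrun
      exact ⟨u, ⟨w.dropLast, by simp [hw], hu⟩, w.getLast hne, by simpa using ha⟩

theorem adj_pow_pos_of_isPath {π : ℤ → Fin G.S} {x : ℤ → A} (hπ : G.IsPath π x) (s : ℤ)
    (m : ℕ) : 0 < (G.adj ^ m) (π s) (π (s + m)) :=
  (adj_pow_pos_iff_exists_run m _ _).2
    ⟨_, List.length_ofFn, by simpa using run_of_isPath hπ (occursAt_ofFn x s m)⟩

theorem matIrred_adj_of_irreducibleShift
    (hmin : ∀ G' : RRGraph A, G'.presents G.lang → G.S ≤ G'.S)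
    (hirr : IrreducibleShift G.lang) : MatIrred G.adj := by
  intro i j
  obtain ⟨u, hu, hui⟩ := exists_forces hmin i
  obtain ⟨v, hv, hvj⟩ := exists_forces hmin j
  obtain ⟨c, z, ⟨π, hπ⟩, k, hocc⟩ := hirr u v hu hv
  obtain ⟨s, -, hs, rfl⟩ := hui z π k hπ (occursAt_append_left (occursAt_append_left hocc))
  obtain ⟨s', hs', -, rfl⟩ := hvj z π _ hπ (occursAt_append_right hocc)
  simp only [List.length_append, Nat.cast_add] at hs'
  refine ⟨(s' - s).toNat, by omega, ?_⟩
  have h := adj_pow_pos_of_isPath hπ s (s' - s).toNat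
  rwa [show s + (s' - s).toNat = s' by omega] at h

theorem isWordOf_lang_of_run_eq_some (hG : MatIrred G.adj) {i j : Fin G.S} {w : List A}
    (h : G.run i w = some j) : isWordOf G.lang w := by
  obtain ⟨k, hk, hpos⟩ := hG j i
  obtain ⟨c, hc, hrun⟩ := (adj_pow_pos_iff_exists_run k j i).1 hpos
  have hcycle : G.run i (w ++ c) = some i := by rw [run_append, h, Option.bind_some, hrun]
  have hne : w ++ c ≠ [] := by simp [← List.length_pos_iff, hc, hk]
  obtain ⟨z, hz, t, hocc⟩ := isWordOf_lang_of_run_eq_self hne hcycle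
  exact ⟨z, hz, t, occursAt_append_left hocc⟩

theorem irreducibleShift_lang_of_matIrred (hG : MatIrred G.adj) : IrreducibleShift G.lang := by
  rintro u v ⟨x, ⟨π, hπ⟩, k, hu⟩ ⟨y, ⟨ρ, hρ⟩, l, hv⟩
  obtain ⟨m, -, hpos⟩ := hG (π (k + u.length)) (ρ l)
  obtain ⟨w, -, hw⟩ := (adj_pow_pos_iff_exists_run m _ _).1 hpos
  refine ⟨w, isWordOf_lang_of_run_eq_some hG (i := π k) (j := ρ (l + v.length)) ?_⟩
  rw [run_append, run_append, run_of_isPath hπ hu, Option.bind_some, hw, Option.bind_some,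
    run_of_isPath hρ hv]

end Adjacency

end RRGraph

theorem stmt5_general {A : Type*} [Fintype A] (X : Set (ℤ → A)) (G : RRGraph A)
    (hG : IsMinRR G X) :
    IrreducibleShift X ↔ MatIrred G.adj := by
  obtain ⟨rfl, -, hmin⟩ := hG
  exact ⟨RRGraph.matIrred_adj_of_irreducibleShift hmin, RRGraph.irreducibleShift_lang_of_matIrred⟩

/-- A sofic shift is irreducible iff its minimal right-resolving presentation is
irreducible (i.e. its adjacency matrix is an irreducible matrix). -/
theorem stmt5 {A : Type*} [Fintype A] (X : Set (ℤ → A)) (G : RRGraph A)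
    (hX : IsSofic X) (hG : IsMinRR G X) :
    IrreducibleShift X ↔ MatIrred G.adj :=
  stmt5_general X G hG
end

section
/- Let X be an irreducible sofic shift with positive topological entropy, 𝒢 its minimal right-resolving presentation with S vertices, and for 2 ≤ j ≤ S let X̃_j be the sofic shift presented by the unsigned j-th subset graph 𝒢̃_j. If w is a synchronising word of X in 𝒢, then no point of X containing w lies in X̃_j; consequently X̃_j is a proper subshift of X. -/
/-!
A path in the subset graph `𝒢̃_j` is a family of `j` paths in `𝒢` carrying the same label,
and they stay pairwise distinct forever, because every step of `𝒢̃_j` is injective on the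
current `j`-set. A synchronising word makes any two paths reading it end at the same vertex,
so it cannot occur in the label of such a path. Conversely, each of the `j` paths shows that
`X̃_j ⊆ X`, and a point of `X` containing the word shows that the inclusion is proper.
-/

open Filter Topology

/-- The vertex set of the `j`-th subset graph: `j`-element subsets of the vertices. -/
def subsetVerts {A : Type*} (G : RRGraph A) (j : ℕ) : Type :=
  {s : Finset (Fin G.S) // s.card = j}

noncomputable instance {A : Type*} (G : RRGraph A) (j : ℕ) : Fintype (subsetVerts G j) := by
  unfold subsetVerts; infer_instance

instance {A : Type*} (G : RRGraph A) (j : ℕ) : DecidableEq (subsetVerts G j) := by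
  unfold subsetVerts; infer_instance

/-- The transition of the unsigned subset graph: from the `j`-set `s` there is an
`a`-labelled edge to the set of `a`-successors of the vertices of `s`, provided these
are all defined and distinct. -/
def subsetStep {A : Type*} (G : RRGraph A) (j : ℕ) (s : subsetVerts G j) (a : A) :
    Option (subsetVerts G j) :=
  let t := s.1.biUnion fun v => (G.δ v a).toFinset
  if h : (∀ v ∈ s.1, (G.δ v a).isSome) ∧ t.card = j then some ⟨t, h.2⟩ else none

/-- The unsigned `j`-th subset graph `𝒢̃_j` of `G` (with vertices renumbered by `Fin`). -/
noncomputable def subsetGraph {A : Type*} (G : RRGraph A) (j : ℕ) : RRGraph A where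
  S := Fintype.card (subsetVerts G j)
  δ := fun u a =>
    (subsetStep G j ((Fintype.equivFin (subsetVerts G j)).symm u) a).map
      (Fintype.equivFin (subsetVerts G j))

/-- The signed subset matrix `A_j` of `G`.  The entry at `(U, W)` counts, with signs, the
symbols `a` carrying all of `U = {v_1 < ⋯ < v_j}` bijectively onto `W`: the sign is `+1`
if `(v_1(a), …, v_j(a))` is an even permutation of the increasing ordering of `W` and
`-1` otherwise. -/
noncomputable def signedAdj {A : Type*} [Fintype A] (G : RRGraph A) (j : ℕ) :
    Matrix (subsetVerts G j) (subsetVerts G j) ℤ :=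
  fun U W => ∑ a : A, ∑ σ : Equiv.Perm (Fin j),
    if ∀ i : Fin j,
        G.δ ((U.1.orderIsoOfFin U.2 i : Fin G.S)) a
          = some ((W.1.orderIsoOfFin W.2 (σ i) : Fin G.S))
    then ((Equiv.Perm.sign σ : ℤˣ) : ℤ) else 0

theorem exists_nat_chain {α : Type*} {P : ℕ → α → Prop} {R : ℕ → α → α → Prop}
    (hstep : ∀ n a, P n a → ∃ b, P (n + 1) b ∧ R n a b) {a₀ : α} (h₀ : P 0 a₀) :
    ∃ f : ℕ → α, f 0 = a₀ ∧ ∀ n, P n (f n) ∧ R n (f n) (f (n + 1)) := by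
  have : Nonempty α := ⟨a₀⟩
  choose! g hgP hgR using hstep
  let f : ℕ → α := fun n => Nat.rec (motive := fun _ => α) a₀ g n
  have hfP : ∀ n, P n (f n) := fun n => by
    induction n with
    | zero => exact h₀
    | succ n ih => exact hgP n _ ih
  exact ⟨f, rfl, fun n => ⟨hfP n, hgR n _ (hfP n)⟩⟩

theorem exists_int_chain {α : Type*} {P : ℤ → α → Prop} {R : ℤ → α → α → Prop}
    (hfwd : ∀ k a, P k a → ∃ b, P (k + 1) b ∧ R k a b)
    (hbwd : ∀ k b, P (k + 1) b → ∃ a, P k a ∧ R k a b) {a₀ : α} (h₀ : P 0 a₀) :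
    ∃ π : ℤ → α, ∀ k, R k (π k) (π (k + 1)) := by
  obtain ⟨f, hf₀, hf⟩ := exists_nat_chain (P := fun n a => P n a) (R := fun n => R n)
    (fun n a ha => by exact_mod_cast hfwd n a ha) h₀
  obtain ⟨g, hg₀, hg⟩ := exists_nat_chain (P := fun n a => P (-n) a)
    (R := fun n a b => R (-(n + 1)) b a)
    (fun n b hb => by push_cast; exact hbwd _ b (by simpa using hb)) (by simpa using h₀)
  set π : ℤ → α := fun k => if 0 ≤ k then f k.toNat else g (-k).toNat
  have hπ_nat (n : ℕ) : π n = f n := by simp [π]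
  have hπ_neg (n : ℕ) : π (-n) = g n := by
    rcases n.eq_zero_or_pos with rfl | hn
    · simp [π, hf₀, hg₀]
    · simp [π, hn.ne']
  refine ⟨π, fun k => ?_⟩
  rcases k with n | n
  · rw [Int.ofNat_eq_natCast, ← Nat.cast_succ, hπ_nat, hπ_nat]
    exact (hf n).2
  · rw [Int.negSucc_eq, show -((n : ℤ) + 1) + 1 = -n by ring, ← Nat.cast_succ,
      hπ_neg, hπ_neg]
    exact_mod_cast (hg n).2

namespace RRGraph

variable {A : Type*} (G : RRGraph A)

theorem run_cons (v : Fin G.S) (a : A) (l : List A) :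
    G.run v (a :: l) = (G.δ v a).bind (G.run · l) := by
  have foldl_none (l' : List A) :
      l'.foldl (fun o b => o.bind fun u => G.δ u b) none = none := by
    induction l' with
    | nil => rfl
    | cons b l' ih => simpa using ih
  cases h : G.δ v a with
  | none => simpa [run, h] using foldl_none l
  | some u => simp [run, h]

end RRGraph

theorem occursAt_cons {A : Type*} {a : A} {l : List A} {x : ℤ → A} {k : ℤ} :
    occursAt (a :: l) x k ↔ x k = a ∧ occursAt l x (k + 1) := by
  refine Fin.forall_fin_succ.trans (and_congr (by simp) (forall_congr' fun i => ?_))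
  simp [add_comm, add_left_comm]

section SubsetStep

variable {A : Type*} {G : RRGraph A} {j : ℕ} {s t : subsetVerts G j} {a : A}

theorem subsetStep_eq_some (h : subsetStep G j s a = some t) :
    (∀ v ∈ s.1, (G.δ v a).isSome) ∧ t.1 = s.1.biUnion fun v => (G.δ v a).toFinset := by
  unfold subsetStep at h
  dsimp only at h
  split_ifs at h with hc
  exact ⟨hc.1, by rw [← Option.some_inj.mp h]⟩

theorem exists_delta_eq_some_mem_of_subsetStep (h : subsetStep G j s a = some t) {v : Fin G.S}
    (hv : v ∈ s.1) : ∃ u, u ∈ t.1 ∧ G.δ v a = some u := by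
  obtain ⟨hsome, ht⟩ := subsetStep_eq_some h
  obtain ⟨u, hu⟩ := Option.isSome_iff_exists.mp (hsome v hv)
  exact ⟨u, ht ▸ Finset.mem_biUnion.mpr ⟨v, hv, by simp [hu]⟩, hu⟩

theorem exists_mem_delta_eq_some_of_subsetStep (h : subsetStep G j s a = some t) {u : Fin G.S}
    (hu : u ∈ t.1) : ∃ v, v ∈ s.1 ∧ G.δ v a = some u := by
  rw [(subsetStep_eq_some h).2] at hu
  obtain ⟨v, hv, huv⟩ := Finset.mem_biUnion.mp hu
  exact ⟨v, hv, by simpa using huv⟩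

theorem injOn_delta_of_subsetStep (h : subsetStep G j s a = some t) :
    Set.InjOn (G.δ · a) s.1 := by
  classical
  obtain ⟨hsome, ht⟩ := subsetStep_eq_some h
  set f : Fin G.S → Fin G.S := fun v => (G.δ v a).getD v
  have hf : ∀ v ∈ s.1, G.δ v a = some (f v) := fun v hv => by
    obtain ⟨u, hu⟩ := Option.isSome_iff_exists.mp (hsome v hv)
    simp [f, hu]
  have himage : s.1.image f = t.1 := by
    ext u
    simp only [ht, Finset.mem_image, Finset.mem_biUnion, Option.mem_toFinset, Option.mem_def]
    exact exists_congr fun v => and_congr_right fun hv => by rw [hf v hv, Option.some_inj]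
  have hinj : Set.InjOn f s.1 := Finset.card_image_iff.mp (by rw [himage, t.2, s.2])
  intro v hv v' hv' hvv'
  exact hinj hv hv' (Option.some_inj.mp ((hf v hv).symm.trans (hvv'.trans (hf v' hv'))))

end SubsetStep

section SubsetPath

variable {A : Type*} {G : RRGraph A} {j : ℕ}

/-- A bi-infinite path in `subsetGraph G j`, read on `subsetVerts G j` rather than through
the renumbering by `Fin`. -/
def IsSubsetPath (G : RRGraph A) (j : ℕ) (x : ℤ → A) (s : ℤ → subsetVerts G j) : Prop :=
  ∀ k, subsetStep G j (s k) (x k) = some (s (k + 1))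

theorem exists_isSubsetPath_of_mem_lang {x : ℤ → A} (hx : x ∈ (subsetGraph G j).lang) :
    ∃ s, IsSubsetPath G j x s := by
  obtain ⟨π, hπ⟩ := hx
  let e := Fintype.equivFin (subsetVerts G j)
  refine ⟨fun k => e.symm (π k), fun k => ?_⟩
  obtain ⟨t, ht, het⟩ := Option.map_eq_some_iff.mp (hπ k)
  rw [ht]
  exact congrArg some (e.eq_symm_apply.mpr het)

namespace IsSubsetPath

variable {x : ℤ → A} {s : ℤ → subsetVerts G j}

theorem exists_run_eq_some (hs : IsSubsetPath G j x s) {w : List A} {k : ℤ}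
    (hw : occursAt w x k) {v : Fin G.S} (hv : v ∈ (s k).1) : ∃ u, G.run v w = some u := by
  induction w generalizing k v with
  | nil => exact ⟨v, rfl⟩
  | cons a l ih =>
    obtain ⟨rfl, hl⟩ := occursAt_cons.mp hw
    obtain ⟨u, hu, hvu⟩ := exists_delta_eq_some_mem_of_subsetStep (hs k) hv
    rw [RRGraph.run_cons, hvu]
    exact ih hl hu

theorem injOn_run (hs : IsSubsetPath G j x s) {w : List A} {k : ℤ} (hw : occursAt w x k) :
    Set.InjOn (G.run · w) (s k).1 := by
  induction w generalizing k with
  | nil => exact fun v _ v' _ h => Option.some_inj.mp h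
  | cons a l ih =>
    obtain ⟨rfl, hl⟩ := occursAt_cons.mp hw
    intro v hv v' hv' hvv'
    obtain ⟨u, hu, hvu⟩ := exists_delta_eq_some_mem_of_subsetStep (hs k) hv
    obtain ⟨u', hu', hvu'⟩ := exists_delta_eq_some_mem_of_subsetStep (hs k) hv'
    simp only [RRGraph.run_cons, hvu, hvu', Option.bind_some] at hvv'
    refine injOn_delta_of_subsetStep (hs k) hv hv' ?_
    simp only [hvu, hvu', ih hl hu hu' hvv']

theorem mem_lang (hs : IsSubsetPath G j x s) (hj : 0 < j) : x ∈ G.lang := by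
  obtain ⟨v₀, hv₀⟩ : (s 0).1.Nonempty := by rw [← Finset.card_pos, (s 0).2]; exact hj
  exact exists_int_chain (P := fun k v => v ∈ (s k).1) (R := fun k v u => G.δ v (x k) = some u)
    (fun k _ hv => exists_delta_eq_some_mem_of_subsetStep (hs k) hv)
    (fun k _ hu => exists_mem_delta_eq_some_of_subsetStep (hs k) hu) hv₀

end IsSubsetPath

theorem notMem_subsetGraph_lang_of_synchronising (hj : 2 ≤ j) {w : List A}
    (hsync : G.Synchronising w) {x : ℤ → A} {k : ℤ} (hw : occursAt w x k) :
    x ∉ (subsetGraph G j).lang := by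
  intro hx
  obtain ⟨s, hs⟩ := exists_isSubsetPath_of_mem_lang hx
  obtain ⟨v, hv, v', hv', hne⟩ := Finset.one_lt_card.mp (by rw [(s k).2]; omega)
  obtain ⟨t, ht⟩ := hsync
  obtain ⟨u, hu⟩ := hs.exists_run_eq_some hw hv
  obtain ⟨u', hu'⟩ := hs.exists_run_eq_some hw hv'
  refine hne (hs.injOn_run hw hv hv' ?_)
  simp only [hu, hu', ht v u hu, ht v' u' hu']

theorem subsetGraph_lang_subset (hj : 0 < j) : (subsetGraph G j).lang ⊆ G.lang := fun _ hx =>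
  (exists_isSubsetPath_of_mem_lang hx).choose_spec.mem_lang hj

end SubsetPath

theorem stmt7_general {A : Type*} (X : Set (ℤ → A)) (G : RRGraph A)
    (hG : IsMinRR G X)
    (j : ℕ) (hj2 : 2 ≤ j)
    (w : List A) (hw : isWordOf X w) (hsync : G.Synchronising w) :
    (∀ x ∈ X, (∃ k : ℤ, occursAt w x k) → x ∉ (subsetGraph G j).lang) ∧
      (subsetGraph G j).lang ⊂ X := by
  have hdisjoint : ∀ x ∈ X, (∃ k : ℤ, occursAt w x k) → x ∉ (subsetGraph G j).lang :=
    fun _ _ ⟨_, hocc⟩ => notMem_subsetGraph_lang_of_synchronising hj2 hsync hocc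
  obtain ⟨x, hxX, hocc⟩ := hw
  refine ⟨hdisjoint, hG.1 ▸ subsetGraph_lang_subset (by omega), fun hXsub => ?_⟩
  exact hdisjoint x hxX hocc (hXsub hxX)

/-- If `w` is a synchronising word of `X` in its minimal right-resolving presentation
`G`, then no point of `X` containing `w` lies in the sofic shift presented by the
unsigned `j`-th subset graph (`2 ≤ j ≤ S`); consequently the latter is a proper
subshift of `X`. -/
theorem stmt7 {A : Type*} [Fintype A] (X : Set (ℤ → A)) (G : RRGraph A)
    (hX : IsSofic X) (hirr : IrreducibleShift X) (hG : IsMinRR G X)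
    (h : ℝ) (hEnt : HasEntropy X h) (hpos : 0 < h)
    (j : ℕ) (hj2 : 2 ≤ j) (hjS : j ≤ G.S)
    (w : List A) (hw : isWordOf X w) (hsync : G.Synchronising w) :
    (∀ x ∈ X, (∃ k : ℤ, occursAt w x k) → x ∉ (subsetGraph G j).lang) ∧
      (subsetGraph G j).lang ⊂ X :=
  stmt7_general X G hG j hj2 w hw hsync
end
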